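/- Let X_1,…,X_k be voting rules and T a tie-breaking mechanism on a finite candidate set C. If at least one X_j satisfies the Condorcet loser criterion and T satisfies the Condorcet loser criterion, then the combined rule X_1+⋯+X_k satisfies the Condorcet loser criterion: for every S ⊆ C with at least two elements and every profile P on S having a Condorcet loser l ∈ S (i.e. N_P(z,l) > N_P(l,z) for every z ∈ S∖{l}), the combined rule does not elect l. -/

import Mathlib

/-
Framework: a finite candidate set `C`. A vote on a nonempty `S ⊆ C` is a strict
linear order on `S`, encoded as a duplicate-free list enumerating `S` (earlier =
more preferred); a profile on `S` is a finite list of such votes. A voting rule /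
tie-breaking mechanism is a function assigning to every `(S, P)` a candidate,
required to lie in `S` when `S` is nonempty. The combined rule `X_1 + ⋯ + X_k`
(with tie-breaking `T`) is defined by the recursive run-off construction.
-/

variable {C : Type*}

/-- The type of (total) choice functions, used both for voting rules and
tie-breaking mechanisms. -/
abbrev Rule (C : Type*) := Finset C → List (List C) → C

/-- `R` is a genuine voting rule (or tie-breaking mechanism): it always picks a
member of the given nonempty candidate set. -/
def IsRule [DecidableEq C] (R : Rule C) : Prop := ∀ S P, S.Nonempty → R S P ∈ S

/-- `v` is a vote on `S`: a strict linear order of the members of `S`. -/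
def VoteOn [DecidableEq C] (S : Finset C) (v : List C) : Prop := v.Nodup ∧ v.toFinset = S

/-- `P` is a profile on `S`. -/
def ProfileOn [DecidableEq C] (S : Finset C) (P : List (List C)) : Prop := ∀ v ∈ P, VoteOn S v

/-- Restriction `P|_W` of a profile to a subset `W` of candidates. -/
def restrictProfile [DecidableEq C] (W : Finset C) (P : List (List C)) : List (List C) :=
  P.map fun v => v.filter (fun x => x ∈ W)

/-- The combined rule `X_0 + ⋯ + X_k` with tie-breaking mechanism `T`:
collect the set `W` of winners of the base rules; if `W` is a singleton, that
candidate wins; if `W = S`, the tie-breaking mechanism decides; otherwise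
recurse on `(W, P|_W)`. (The final `else` branch is unreachable for genuine
voting rules, since then `W ⊆ S` always holds.) -/
def combined [DecidableEq C] {k : ℕ} (X : Fin (k + 1) → Rule C) (T : Rule C) :
    Finset C → List (List C) → C
  | S, P =>
    let W : Finset C := Finset.image (fun j => X j S P) Finset.univ
    if W.card = 1 then X 0 S P
    else if W = S then T S P
    else if h : W ⊂ S then combined X T W (restrictProfile W P)
    else T S P
  termination_by S _ => S.card
  decreasing_by exact Finset.card_lt_card h

/-- `N P x y`: the number of votes in `P` ranking `x` above `y`. -/
def pairN [DecidableEq C] (P : List (List C)) (x y : C) : ℕ :=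
  (P.filter (fun v => v.idxOf x < v.idxOf y)).length

/-- `R` satisfies the Condorcet loser criterion: whenever a profile `P` on `S`
with `|S| ≥ 2` has a Condorcet loser `l ∈ S` (i.e. `N_P(z,l) > N_P(l,z)` for
every `z ∈ S \ {l}`), `R` does not elect `l`. -/
def CondorcetLoserCriterion [DecidableEq C] (R : Rule C) : Prop :=
  ∀ (S : Finset C) (P : List (List C)) (l : C),
    2 ≤ S.card → ProfileOn S P → l ∈ S →
    (∀ z ∈ S, z ≠ l → pairN P z l > pairN P l z) → R S P ≠ l

/-
Induction on `|S|`. If all base rules agree, the winner is that of the rule `X_j` satisfying the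
criterion; if `W = S`, the tie-breaker decides. Otherwise the run-off on `W ⊊ S` elects a member of
`W`, so `l` can only win if `l ∈ W`; but restricting a profile preserves every pairwise count
`N(x, y)` between candidates that survive, so `l` is still a Condorcet loser of `P|_W` and the
induction hypothesis applies.
-/

theorem List.idxOf_filter_lt_idxOf_filter_iff {α : Type*} [DecidableEq α] {p : α → Bool}
    {x y : α} {v : List α} (hx : x ∈ v) (hy : y ∈ v) (hpx : p x) (hpy : p y) :
    (v.filter p).idxOf x < (v.filter p).idxOf y ↔ v.idxOf x < v.idxOf y := by
  induction v with
  | nil => simp at hx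
  | cons a t ih =>
    by_cases hax : a = x
    · subst hax
      by_cases hay : a = y <;> simp [List.filter_cons, hpx, List.idxOf_cons_ne, hay]
    by_cases hay : a = y
    · subst hay
      simp [hpy, List.idxOf_cons_ne, hax]
    have hxt : x ∈ t := by simpa [Ne.symm hax] using hx
    have hyt : y ∈ t := by simpa [Ne.symm hay] using hy
    by_cases hpa : p a <;> simp [hpa, List.idxOf_cons_ne, hax, hay, ih hxt hyt]

section

variable [DecidableEq C]

def IsCondorcetLoser (P : List (List C)) (S : Finset C) (l : C) : Prop :=
  ∀ z ∈ S, z ≠ l → pairN P z l > pairN P l z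

theorem profileOn_restrictProfile {W S : Finset C} (hWS : W ⊆ S) {P : List (List C)}
    (hP : ProfileOn S P) : ProfileOn W (restrictProfile W P) := by
  intro v hv
  obtain ⟨u, hu, rfl⟩ := List.mem_map.1 hv
  obtain ⟨hnodup, hu_S⟩ := hP u hu
  refine ⟨hnodup.filter _, ?_⟩
  rw [List.toFinset_filter, hu_S]
  ext a
  simpa using fun ha => hWS ha

theorem pairN_restrictProfile {W S : Finset C} (hWS : W ⊆ S) {P : List (List C)}
    (hP : ProfileOn S P) {x y : C} (hx : x ∈ W) (hy : y ∈ W) :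
    pairN (restrictProfile W P) x y = pairN P x y := by
  unfold pairN restrictProfile
  rw [List.filter_map, List.length_map]
  congr 1
  refine List.filter_congr fun v hv => ?_
  have hv_S : v.toFinset = S := (hP v hv).2
  have hxv : x ∈ v := by rw [← List.mem_toFinset, hv_S]; exact hWS hx
  have hyv : y ∈ v := by rw [← List.mem_toFinset, hv_S]; exact hWS hy
  simpa using List.idxOf_filter_lt_idxOf_filter_iff hxv hyv (p := fun a => decide (a ∈ W))
    (by simpa using hx) (by simpa using hy)

theorem IsCondorcetLoser.restrictProfile {W S : Finset C} (hWS : W ⊆ S) {P : List (List C)}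
    (hP : ProfileOn S P) {l : C} (hl : l ∈ W) (hloser : IsCondorcetLoser P S l) :
    IsCondorcetLoser (restrictProfile W P) W l := by
  intro z hz hzl
  rw [pairN_restrictProfile hWS hP hz hl, pairN_restrictProfile hWS hP hl hz]
  exact hloser z (hWS hz) hzl

theorem isRule_combined {k : ℕ} {X : Fin (k + 1) → Rule C} {T : Rule C}
    (hX : ∀ j, IsRule (X j)) (hT : IsRule T) : IsRule (combined X T) := by
  intro S
  induction S using Finset.strongInduction with
  | _ S ih =>
    intro P hS
    rw [combined]
    set W : Finset C := Finset.image (fun j => X j S P) Finset.univ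
    have hW : W.Nonempty := Finset.image_nonempty.2 Finset.univ_nonempty
    split_ifs with _ _ hWS
    · exact hX 0 S P hS
    · exact hT S P hS
    · exact hWS.subset (ih W hWS _ hW)
    · exact hT S P hS

end

theorem combined_condorcet_loser_general [DecidableEq C] {k : ℕ}
    (X : Fin (k + 1) → Rule C) (T : Rule C)
    (hX : ∀ j, IsRule (X j)) (hT : IsRule T)
    (hC : ∃ j, CondorcetLoserCriterion (X j)) (hTC : CondorcetLoserCriterion T) :
    CondorcetLoserCriterion (combined X T) := by
  obtain ⟨j, hj⟩ := hC
  intro S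
  induction S using Finset.strongInduction with
  | _ S ih =>
    intro P l hcard hP hl hloser
    rw [combined]
    set W : Finset C := Finset.image (fun i => X i S P) Finset.univ
    have h0W : X 0 S P ∈ W := Finset.mem_image_of_mem _ (Finset.mem_univ 0)
    have hjW : X j S P ∈ W := Finset.mem_image_of_mem _ (Finset.mem_univ j)
    split_ifs with hW_one hW_eq hWS
    · rw [Finset.card_le_one.1 hW_one.le _ h0W _ hjW]
      exact hj S P l hcard hP hl hloser
    · exact hTC S P l hcard hP hl hloser
    · by_cases hlW : l ∈ W
      · have hW_card : 2 ≤ W.card := by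
          have := Finset.card_pos.2 ⟨_, h0W⟩
          omega
        exact ih W hWS _ l hW_card (profileOn_restrictProfile hWS.subset hP) hlW
          (IsCondorcetLoser.restrictProfile hWS.subset hP hlW hloser)
      · exact fun hwin => hlW (hwin ▸ isRule_combined hX hT W _ ⟨_, h0W⟩)
    · exact hTC S P l hcard hP hl hloser

/-- If at least one of the base voting rules satisfies the Condorcet loser
criterion and the tie-breaking mechanism satisfies the Condorcet loser
criterion, then the combined rule `X_0 + ⋯ + X_k` satisfies the Condorcet
loser criterion. -/
theorem combined_condorcet_loser [DecidableEq C] [Fintype C] {k : ℕ}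
    (X : Fin (k + 1) → Rule C) (T : Rule C)
    (hX : ∀ j, IsRule (X j)) (hT : IsRule T)
    (hC : ∃ j, CondorcetLoserCriterion (X j)) (hTC : CondorcetLoserCriterion T) :
    CondorcetLoserCriterion (combined X T) :=
  combined_condorcet_loser_general X T hX hT hC hTC
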